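/- Define γ : [0,1] → ℝ² by γ(t) = (0, −2πt) for t ∈ [0,1/2) and γ(t) = (2πt − π, −π) for t ∈ [1/2,1]. Then γ is a path from (0,0) to (π,−π), and for every t ∈ [0,1] the point γ(t) lies in A₁ ∪ B₁ ∪ B₂, i.e., Re φ(γ(t)) ≥ 1/10, or Re φ(γ(t)) ≤ −1/10, or Im φ(γ(t)) ≤ −1/10. More precisely: Re φ(γ(t)) ≥ 1/3 for t ∈ [0,1/4]; Im φ(γ(t)) ≤ −1/3 for t ∈ [1/4,3/8]; Re φ(γ(t)) < −1/10 for t ∈ [3/8,1/2]; and φ(γ(t)) = −1/3 for t ∈ [1/2,1]. -/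

import Mathlib

open Real

/-- The function `φ(x,y) = (1/3)(e^{ix} + e^{iy} + e^{i(x+y)})`. -/
noncomputable def phi : ℝ × ℝ → ℂ := fun p =>
  (1 / 3) * (Complex.exp (Complex.I * p.1) + Complex.exp (Complex.I * p.2) +
    Complex.exp (Complex.I * (p.1 + p.2)))

/-- `A₁ = {(x,y) ∈ [−π,π]² : Re φ(x,y) ≥ 1/10}`. -/
noncomputable def A1 : Set (ℝ × ℝ) :=
  {p | p ∈ Set.Icc (-π) π ×ˢ Set.Icc (-π) π ∧ (phi p).re ≥ 1 / 10}

/-- `B₁ = {(x,y) ∈ [−π,π]² : Re φ(x,y) ≤ −1/10}`. -/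
noncomputable def B1 : Set (ℝ × ℝ) :=
  {p | p ∈ Set.Icc (-π) π ×ˢ Set.Icc (-π) π ∧ (phi p).re ≤ -(1 / 10)}

/-- `B₂ = {(x,y) ∈ [−π,π]² : Im φ(x,y) ≤ −1/10}`. -/
noncomputable def B2 : Set (ℝ × ℝ) :=
  {p | p ∈ Set.Icc (-π) π ×ˢ Set.Icc (-π) π ∧ (phi p).im ≤ -(1 / 10)}

/-- The path `γ(t) = (0, −2πt)` for `t < 1/2`, `γ(t) = (2πt − π, −π)` for `t ≥ 1/2`. -/
noncomputable def gamma : ℝ → ℝ × ℝ := fun t =>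
  if t < 1 / 2 then (0, -(2 * π * t)) else (2 * π * t - π, -π)

/-!
On the vertical leg `γ(t) = (0, -s)` with `s = 2πt` we have `φ = (1 + 2e^{-is})/3`, so
`Re φ = (1 + 2 cos s)/3` and `Im φ = -2 sin s / 3`; the three estimates there are elementary bounds
on `cos` and `sin` over `[0, π/2]`, `[π/2, 3π/4]` and `[3π/4, π]`. On the horizontal leg `y = -π`,
`e^{iy} = -1` while `e^{ix} + e^{i(x - π)} = 0`, so `φ` is constantly `-1/3`.
-/

open Set

lemma phi_eq_cos_add_sin_mul_I (x y : ℝ) :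
    phi (x, y) = ((cos x + cos y + cos (x + y)) / 3 : ℝ) +
      ((sin x + sin y + sin (x + y)) / 3 : ℝ) * Complex.I := by
  simp only [phi, mul_comm Complex.I, ← Complex.ofReal_add, Complex.exp_mul_I]
  push_cast
  ring

lemma phi_re (x y : ℝ) : (phi (x, y)).re = (cos x + cos y + cos (x + y)) / 3 := by
  simp only [phi_eq_cos_add_sin_mul_I, Complex.add_re, Complex.ofReal_re, Complex.mul_I_re,
    Complex.ofReal_im, neg_zero, add_zero]

lemma phi_im (x y : ℝ) : (phi (x, y)).im = (sin x + sin y + sin (x + y)) / 3 := by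
  simp only [phi_eq_cos_add_sin_mul_I, Complex.add_im, Complex.ofReal_im, Complex.mul_I_im,
    Complex.ofReal_re, zero_add]

lemma phi_zero_neg_re (s : ℝ) : (phi (0, -s)).re = (1 + 2 * cos s) / 3 := by
  rw [phi_re, zero_add, cos_zero, cos_neg]
  ring

lemma phi_zero_neg_im (s : ℝ) : (phi (0, -s)).im = -(2 * sin s) / 3 := by
  rw [phi_im, zero_add, sin_zero, sin_neg]
  ring

lemma phi_neg_pi (x : ℝ) : phi (x, -π) = -(1 / 3) := by
  apply Complex.ext
  · rw [phi_re, ← sub_eq_add_neg, cos_neg, cos_pi, cos_sub_pi]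
    norm_num
  · rw [phi_im, ← sub_eq_add_neg, sin_neg, sin_pi, sin_sub_pi]
    simp

lemma one_third_le_phi_zero_neg_re {s : ℝ} (hs : s ∈ Icc (-(π / 2)) (π / 2)) :
    1 / 3 ≤ (phi (0, -s)).re := by
  rw [phi_zero_neg_re]
  linarith [cos_nonneg_of_mem_Icc hs]

lemma half_le_sin_of_mem_Icc {s : ℝ} (hs : s ∈ Icc (π / 6) (5 * π / 6)) : 1 / 2 ≤ sin s := by
  have hdist : |s - π / 2| ≤ π / 3 := abs_le.2 ⟨by linarith [hs.1], by linarith [hs.2]⟩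
  calc 1 / 2 = cos (π / 3) := cos_pi_div_three.symm
    _ ≤ cos |s - π / 2| := cos_le_cos_of_nonneg_of_le_pi (abs_nonneg _) (by linarith [pi_pos]) hdist
    _ = sin s := by rw [cos_abs, cos_sub_pi_div_two]

lemma phi_zero_neg_im_le {s : ℝ} (hs : s ∈ Icc (π / 6) (5 * π / 6)) :
    (phi (0, -s)).im ≤ -(1 / 3) := by
  rw [phi_zero_neg_im]
  linarith [half_le_sin_of_mem_Icc hs]

lemma phi_zero_neg_re_lt {s : ℝ} (hs : s ∈ Icc (3 * π / 4) π) :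
    (phi (0, -s)).re < -(1 / 10) := by
  have hcos : cos s ≤ -(√2 / 2) :=
    calc cos s ≤ cos (π - π / 4) :=
          cos_le_cos_of_nonneg_of_le_pi (by linarith [pi_pos]) hs.2 (by linarith [hs.1])
      _ = -(√2 / 2) := by rw [cos_pi_sub, cos_pi_div_four]
  have hsqrt : (13 / 10 : ℝ) < √2 := (lt_sqrt (by norm_num)).2 (by norm_num)
  rw [phi_zero_neg_re]
  linarith

lemma gamma_of_half_le {t : ℝ} (ht : 1 / 2 ≤ t) : gamma t = (2 * π * t - π, -π) :=
  if_neg (not_lt.2 ht)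

lemma gamma_of_le_half {t : ℝ} (ht : t ≤ 1 / 2) : gamma t = (0, -(2 * π * t)) := by
  rcases ht.lt_or_eq with ht | rfl
  · exact if_pos ht
  · rw [gamma_of_half_le le_rfl]
    ext <;> ring

lemma continuous_gamma : Continuous gamma := by
  refine Continuous.if (fun t ht => ?_) (by fun_prop) (by fun_prop)
  rw [Iio_def, frontier_Iio, mem_singleton_iff] at ht
  subst ht
  exact (gamma_of_le_half le_rfl).symm.trans (gamma_of_half_le le_rfl)

lemma gamma_mem_square {t : ℝ} (ht : t ∈ Icc (0 : ℝ) 1) :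
    gamma t ∈ Icc (-π) π ×ˢ Icc (-π) π := by
  have hπ := pi_pos
  rcases le_total t (1 / 2) with h | h
  · rw [gamma_of_le_half h]
    exact ⟨⟨by linarith, by linarith⟩, ⟨by nlinarith [ht.1], by nlinarith [ht.1]⟩⟩
  · rw [gamma_of_half_le h]
    exact ⟨⟨by nlinarith [ht.2], by nlinarith [ht.2]⟩, ⟨le_rfl, by linarith⟩⟩

lemma one_third_le_re_phi_gamma {t : ℝ} (ht : t ∈ Icc (0 : ℝ) (1 / 4)) :
    1 / 3 ≤ (phi (gamma t)).re := by
  have hπ := pi_pos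
  rw [gamma_of_le_half (by linarith [ht.2])]
  exact one_third_le_phi_zero_neg_re ⟨by nlinarith [ht.1], by nlinarith [ht.2]⟩

lemma im_phi_gamma_le {t : ℝ} (ht : t ∈ Icc (1 / 4 : ℝ) (3 / 8)) :
    (phi (gamma t)).im ≤ -(1 / 3) := by
  have hπ := pi_pos
  rw [gamma_of_le_half (by linarith [ht.2])]
  exact phi_zero_neg_im_le ⟨by nlinarith [ht.1], by nlinarith [ht.2]⟩

lemma re_phi_gamma_lt {t : ℝ} (ht : t ∈ Icc (3 / 8 : ℝ) (1 / 2)) :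
    (phi (gamma t)).re < -(1 / 10) := by
  have hπ := pi_pos
  rw [gamma_of_le_half ht.2]
  exact phi_zero_neg_re_lt ⟨by nlinarith [ht.1], by nlinarith [ht.2]⟩

lemma phi_gamma_of_half_le {t : ℝ} (ht : 1 / 2 ≤ t) : phi (gamma t) = -(1 / 3) := by
  rw [gamma_of_half_le ht, phi_neg_pi]

lemma gamma_mem_A1_union_B1_union_B2 {t : ℝ} (ht : t ∈ Icc (0 : ℝ) 1) :
    gamma t ∈ A1 ∪ B1 ∪ B2 := by
  have hsq := gamma_mem_square ht
  rcases le_total t (1 / 4) with h₁ | h₁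
  · exact Or.inl (Or.inl ⟨hsq, by linarith [one_third_le_re_phi_gamma ⟨ht.1, h₁⟩]⟩)
  rcases le_total t (3 / 8) with h₂ | h₂
  · exact Or.inr ⟨hsq, by linarith [im_phi_gamma_le ⟨h₁, h₂⟩]⟩
  rcases le_total t (1 / 2) with h₃ | h₃
  · exact Or.inl (Or.inr ⟨hsq, (re_phi_gamma_lt ⟨h₂, h₃⟩).le⟩)
  · exact Or.inl (Or.inr ⟨hsq, by rw [phi_gamma_of_half_le h₃]; norm_num⟩)

/-- `γ` is a path from `(0,0)` to `(π,−π)` staying in `A₁ ∪ B₁ ∪ B₂`, with the precise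
estimates on each of the four pieces. -/
theorem gamma_path_in_A1_B1_B2 :
    gamma 0 = (0, 0) ∧ gamma 1 = (π, -π) ∧
    ContinuousOn gamma (Set.Icc 0 1) ∧
    (∀ t ∈ Set.Icc (0 : ℝ) 1, gamma t ∈ A1 ∪ B1 ∪ B2) ∧
    (∀ t ∈ Set.Icc (0 : ℝ) (1 / 4), (phi (gamma t)).re ≥ 1 / 3) ∧
    (∀ t ∈ Set.Icc (1 / 4 : ℝ) (3 / 8), (phi (gamma t)).im ≤ -(1 / 3)) ∧
    (∀ t ∈ Set.Icc (3 / 8 : ℝ) (1 / 2), (phi (gamma t)).re < -(1 / 10)) ∧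
    (∀ t ∈ Set.Icc (1 / 2 : ℝ) 1, phi (gamma t) = -(1 / 3)) := by
  refine ⟨?_, ?_, continuous_gamma.continuousOn, fun _ => gamma_mem_A1_union_B1_union_B2,
    fun _ => one_third_le_re_phi_gamma, fun _ => im_phi_gamma_le, fun _ => re_phi_gamma_lt,
    fun t ht => phi_gamma_of_half_le ht.1⟩
  · rw [gamma_of_le_half (by norm_num)]
    simp
  · rw [gamma_of_half_le (by norm_num)]
    ext <;> ring
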